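/- arXiv:2409.08422 — 3 statements merged into one kernel-verified Lean document; each statement's English description precedes it below -/
import Mathlib

section
/- Let $A \in \underline{\mathbb{R}}^{n \times p}$ be doubly $\mathbb{R}$-astic, $b \in \mathbb{R}^n$, and $\theta_{ps} = -(A^\top \boxtimes (-b))$ the principal solution. Then $\hat\theta = \theta_{ps} + \frac{1}{2}\|A \boxtimes \theta_{ps} - b\|_\infty \cdot e$, where $e$ is the all-ones vector, minimizes the unconstrained objective $\|A \boxtimes \theta - b\|_\infty$ over $\theta \in \underline{\mathbb{R}}^p$, and the minimum value is $\frac{1}{2}\|A \boxtimes \theta_{ps} - b\|_\infty$. -/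
/-
Residuation: a vector `θ` satisfies `A ⊠ θ ≤ b` iff `θ ≤ θps`, so the principal solution is the
greatest subsolution and `A ⊠ θps ≤ b`. If `A ⊠ θ = v` with `‖v - b‖ = δ`, then `A ⊠ (θ - δ) ≤ b`,
hence `θ - δ ≤ θps` and, by monotonicity, `v - δ ≤ A ⊠ θps`; so `b - A ⊠ θps ≤ 2δ`, i.e.
`‖A ⊠ θps - b‖ ≤ 2δ`. Shifting `θps` by `½‖A ⊠ θps - b‖` shifts `A ⊠ θps` by the same constant and
centres the residual in `[-½‖A ⊠ θps - b‖, ½‖A ⊠ θps - b‖]`, which attains the bound.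
-/

open Finset

def mpMulVec {m n : ℕ} (A : Fin m → Fin n → WithBot ℝ) (v : Fin n → WithBot ℝ) :
    Fin m → WithBot ℝ :=
  fun i => univ.sup fun j => A i j + v j

lemma WithBot.add_coe_le_coe_iff {α : Type*} [AddGroup α] [LinearOrder α]
    [AddRightMono α] (x : WithBot α) (s t : α) : x + s ≤ t ↔ x ≤ ((t - s : α) : WithBot α) := by
  induction x using WithBot.recBotCoe with
  | bot => simp
  | coe a => rw [← WithBot.coe_add, WithBot.coe_le_coe, WithBot.coe_le_coe, le_sub_iff_add_le]

section MaxPlus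

variable {m n : ℕ} (A : Fin m → Fin n → WithBot ℝ)

lemma mpMulVec_mono {v w : Fin n → WithBot ℝ} (h : v ≤ w) :
    mpMulVec A v ≤ mpMulVec A w :=
  fun _ => Finset.sup_mono_fun fun j _ => by gcongr; exact h j

lemma mpMulVec_add_const (v : Fin n → WithBot ℝ) (c : ℝ)
    (i : Fin m) : mpMulVec A (fun j => v j + c) i = mpMulVec A v i + c := by
  have hmono : Monotone fun x : WithBot ℝ => x + c := fun _ _ h => add_le_add h le_rfl
  simp only [mpMulVec, ← add_assoc]
  exact (Finset.apply_sup_eq_sup_comp_of_linearOrder _ hmono (WithBot.bot_add _)).symm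

variable {A} {b : Fin m → ℝ} {θps : Fin n → ℝ}

lemma le_principal_iff_mpMulVec_le
    (hps : ∀ j, ((-(θps j) : ℝ) : WithBot ℝ) =
      mpMulVec (fun j i => A i j) (fun i => ((-(b i) : ℝ) : WithBot ℝ)) j)
    (θ : Fin n → WithBot ℝ) :
    (∀ j, θ j ≤ θps j) ↔ ∀ i, mpMulVec A θ i ≤ b i := by
  have hentry : ∀ j, θ j ≤ θps j ↔ ∀ i, A i j + θ j ≤ b i := by
    intro j
    induction θ j using WithBot.recBotCoe with
    | bot => simp
    | coe t =>
      rw [WithBot.coe_le_coe, ← neg_le_neg_iff, ← WithBot.coe_le_coe, hps j, mpMulVec,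
        Finset.sup_le_iff]
      simp only [mem_univ, true_implies, WithBot.add_coe_le_coe_iff]
      refine forall_congr' fun i => ?_
      rw [show -t - -b i = b i - t by ring]
  simp only [mpMulVec, Finset.sup_le_iff, mem_univ, true_implies, hentry]
  exact forall_comm

lemma mpMulVec_principal_le
    (hps : ∀ j, ((-(θps j) : ℝ) : WithBot ℝ) =
      mpMulVec (fun j i => A i j) (fun i => ((-(b i) : ℝ) : WithBot ℝ)) j)
    (i : Fin m) : mpMulVec A (fun j => (θps j : WithBot ℝ)) i ≤ b i :=
  (le_principal_iff_mpMulVec_le hps _).1 (fun _ => le_rfl) i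

lemma norm_principal_residual_le
    (hps : ∀ j, ((-(θps j) : ℝ) : WithBot ℝ) =
      mpMulVec (fun j i => A i j) (fun i => ((-(b i) : ℝ) : WithBot ℝ)) j)
    {Aps : Fin m → ℝ}
    (hAps : ∀ i, (Aps i : WithBot ℝ) = mpMulVec A (fun j => (θps j : WithBot ℝ)) i)
    {θ : Fin n → WithBot ℝ} {v : Fin m → ℝ} (hv : ∀ i, mpMulVec A θ i = v i) :
    ‖Aps - b‖ ≤ 2 * ‖v - b‖ := by
  set δ := ‖v - b‖
  have hvb : ∀ i, |v i - b i| ≤ δ := fun i => by simpa using norm_le_pi_norm (v - b) i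
  have hshift : ∀ i, mpMulVec A (fun j => θ j + ((-δ : ℝ) : WithBot ℝ)) i ≤ b i := by
    intro i
    rw [mpMulVec_add_const, hv, ← WithBot.coe_add, WithBot.coe_le_coe]
    linarith [(abs_le.1 (hvb i)).2]
  have hlow : ∀ i, v i - δ ≤ Aps i := by
    intro i
    have := mpMulVec_mono A ((le_principal_iff_mpMulVec_le hps _).2 hshift) i
    rw [mpMulVec_add_const, hv, ← hAps, ← WithBot.coe_add, WithBot.coe_le_coe] at this
    linarith
  refine (pi_norm_le_iff_of_nonneg (by positivity)).2 fun i => ?_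
  have hsub : Aps i ≤ b i := by exact_mod_cast (hAps i).trans_le (mpMulVec_principal_le hps i)
  rw [Pi.sub_apply, Real.norm_eq_abs, abs_le]
  constructor <;> linarith [hlow i, (abs_le.1 (hvb i)).1]

end MaxPlus

lemma norm_sub_le_half_of_le {ι : Type*} [Fintype ι] {x b : ι → ℝ} (hxb : x ≤ b)
    {y : ι → ℝ} (hy : ∀ i, y i = x i + ‖x - b‖ / 2) : ‖y - b‖ ≤ ‖x - b‖ / 2 := by
  refine (pi_norm_le_iff_of_nonneg (by positivity)).2 fun i => ?_
  have hx : b i - x i ≤ ‖x - b‖ := by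
    simpa [norm_sub_rev x] using (le_abs_self _).trans (norm_le_pi_norm (b - x) i)
  rw [Pi.sub_apply, Real.norm_eq_abs, abs_le, hy i]
  constructor <;> linarith [hxb i]

theorem mp_unconstrained_regression_general {n p : ℕ}
    (A : Fin n → Fin p → WithBot ℝ)
    (b : Fin n → ℝ)
    (θps : Fin p → ℝ)
    (hps : ∀ j, ((-(θps j) : ℝ) : WithBot ℝ) =
          mpMulVec (fun j i => A i j) (fun i => ((-(b i) : ℝ) : WithBot ℝ)) j)
    (Aps : Fin n → ℝ)
    (hAps : ∀ i, (Aps i : WithBot ℝ) =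
          mpMulVec A (fun j => ((θps j : ℝ) : WithBot ℝ)) i)
    (Ahat : Fin n → ℝ)
    (hAhat : ∀ i, (Ahat i : WithBot ℝ) =
          mpMulVec A (fun j => ((θps j + ‖Aps - b‖ / 2 : ℝ) : WithBot ℝ)) i) :
    ‖Ahat - b‖ = ‖Aps - b‖ / 2 ∧
    ∀ (θ : Fin p → WithBot ℝ) (v : Fin n → ℝ),
      (∀ i, mpMulVec A θ i = (v i : WithBot ℝ)) →
      ‖Aps - b‖ / 2 ≤ ‖v - b‖ := by
  have hApsb : Aps ≤ b := fun i => by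
    exact_mod_cast (hAps i).trans_le (mpMulVec_principal_le hps i)
  have hAhat_shift : ∀ i, Ahat i = Aps i + ‖Aps - b‖ / 2 := fun i => by
    have h := hAhat i
    simp only [WithBot.coe_add] at h
    rw [mpMulVec_add_const, ← hAps] at h
    exact_mod_cast h
  refine ⟨le_antisymm (norm_sub_le_half_of_le hApsb hAhat_shift) ?_, fun θ v hv => ?_⟩
  · linarith [norm_principal_residual_le hps hAps fun i => (hAhat i).symm]
  · linarith [norm_principal_residual_le hps hAps hv]

/-- for doubly ℝ-astic `A` and real `b`, the vector
`θ̂ = θps + ½‖A ⊠ θps - b‖_∞ · e` minimizes the unconstrained `∞`-norm residual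
`‖A ⊠ θ - b‖_∞` over `θ ∈ (ℝ ∪ {-∞})ᵖ`, and the minimum value is
`½‖A ⊠ θps - b‖_∞`. -/
theorem mp_unconstrained_regression {n p : ℕ}
    (A : Fin n → Fin p → WithBot ℝ)
    (hrow : ∀ i, ∃ j, A i j ≠ ⊥) (hcol : ∀ j, ∃ i, A i j ≠ ⊥)
    (b : Fin n → ℝ)
    (θps : Fin p → ℝ)
    (hps : ∀ j, ((-(θps j) : ℝ) : WithBot ℝ) =
          mpMulVec (fun j i => A i j) (fun i => ((-(b i) : ℝ) : WithBot ℝ)) j)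
    (Aps : Fin n → ℝ)
    (hAps : ∀ i, (Aps i : WithBot ℝ) =
          mpMulVec A (fun j => ((θps j : ℝ) : WithBot ℝ)) i)
    (Ahat : Fin n → ℝ)
    (hAhat : ∀ i, (Ahat i : WithBot ℝ) =
          mpMulVec A (fun j => ((θps j + ‖Aps - b‖ / 2 : ℝ) : WithBot ℝ)) i) :
    ‖Ahat - b‖ = ‖Aps - b‖ / 2 ∧
    ∀ (θ : Fin p → WithBot ℝ) (v : Fin n → ℝ),
      (∀ i, mpMulVec A θ i = (v i : WithBot ℝ)) →
      ‖Aps - b‖ / 2 ≤ ‖v - b‖ :=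
  mp_unconstrained_regression_general A b θps hps Aps hAps Ahat hAhat
end

section
/- With $F_s, G_s \in \underline{\mathbb{R}}^{n \times p}$ defined from features $f$ and the empirical Bellman operator $\mathbf{B}_s$ with discount $\gamma \in (0,1)$, suppose $\bar C_s \in \underline{\mathbb{R}}^{p \times p}$ satisfies $F_s \boxtimes \bar C_s = G_s$ and $\bar\theta \in \mathbb{R}^p$ satisfies the max-plus fixed-point equation $\bar\theta = \bar C_s \boxtimes (\gamma\bar\theta)$. Then $Q_{\bar\theta}(z) = \max_j([f]_j(z) + [\bar\theta]_j)$ satisfies the empirical Bellman equation $Q_{\bar\theta}(z_i) = r_i + \gamma\max_{u^+} Q_{\bar\theta}(x_i^+, u^+)$ for all $i \in [1:n]$. -/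
/-!
In max-plus algebra `Q_θ̄(zᵢ) = (Fₛ ⊠ θ̄)ᵢ = (Fₛ ⊠ (C̄ₛ ⊠ γθ̄))ᵢ = ((Fₛ ⊠ C̄ₛ) ⊠ γθ̄)ᵢ = (Gₛ ⊠ γθ̄)ᵢ`
by associativity of `⊠`. On the other side, the empirical Bellman operator commutes with max-plus
combinations, `𝐁ₛ (maxⱼ (gⱼ + cⱼ)) = maxⱼ (𝐁ₛ gⱼ + γ cⱼ)`, because for `γ ≥ 0` scaling by `γ` is
monotone and additive; with `gⱼ = fⱼ` and `cⱼ = θ̄ⱼ` this is `(Gₛ ⊠ γθ̄)ᵢ` again.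
-/

open Finset

/-- Max-plus matrix-matrix product. -/
def mpMul {m n p : ℕ} (A : Fin m → Fin n → WithBot ℝ) (B : Fin n → Fin p → WithBot ℝ) :
    Fin m → Fin p → WithBot ℝ :=
  fun i k => univ.sup fun j => A i j + B j k

def empBellman {X U : Type*} [Fintype U] {N : ℕ} (r : Fin N → ℝ) (γ : ℝ)
    (xp : Fin N → X) (g : X × U → WithBot ℝ) : Fin N → WithBot ℝ :=
  fun i => (r i : WithBot ℝ) + (univ.sup fun u => g (xp i, u)).map (γ * ·)

namespace WithBot

variable {ι M : Type*} [AddCommMonoid M] [LinearOrder M] [IsOrderedAddMonoid M]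

theorem finset_sup_add (s : Finset ι) (f : ι → WithBot M) (c : WithBot M) :
    s.sup f + c = s.sup fun i => f i + c :=
  apply_sup_eq_sup_comp_of_linearOrder (· + c) (monotone_id.add_const c) (bot_add c)

theorem add_finset_sup (s : Finset ι) (f : ι → WithBot M) (c : WithBot M) :
    c + s.sup f = s.sup fun i => c + f i :=
  apply_sup_eq_sup_comp_of_linearOrder (c + ·) (monotone_id.const_add c) (add_bot c)

theorem map_finset_sup {α β : Type*} [LinearOrder α] [LinearOrder β] {g : α → β}
    (hg : Monotone g) (s : Finset ι) (f : ι → WithBot α) :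
    (s.sup f).map g = s.sup fun i => (f i).map g :=
  apply_sup_eq_sup_comp_of_linearOrder (WithBot.map g) hg.withBot_map (map_bot g)

end WithBot

theorem mpMulVec_mpMul {m n p : ℕ} (A : Fin m → Fin n → WithBot ℝ)
    (B : Fin n → Fin p → WithBot ℝ) (v : Fin p → WithBot ℝ) :
    mpMulVec (mpMul A B) v = mpMulVec A (mpMulVec B v) := by
  funext i
  simp only [mpMulVec, mpMul, WithBot.finset_sup_add, WithBot.add_finset_sup, add_assoc]
  exact Finset.sup_comm _ _ _

theorem empBellman_finset_sup {X U ι : Type*} [Fintype U] [Fintype ι] {N : ℕ} (r : Fin N → ℝ)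
    {γ : ℝ} (hγ : 0 ≤ γ) (xp : Fin N → X) (g : ι → X × U → WithBot ℝ) (c : ι → ℝ) (i : Fin N) :
    empBellman r γ xp (fun w => univ.sup fun j => g j w + (c j : WithBot ℝ)) i =
      univ.sup fun j => empBellman r γ xp (g j) i + ((γ * c j : ℝ) : WithBot ℝ) := by
  have hscale := monotone_mul_left_of_nonneg hγ
  have hadd (a b : WithBot ℝ) : (a + b).map (γ * ·) = a.map (γ * ·) + b.map (γ * ·) :=
    WithBot.map_add (AddMonoidHom.mulLeft γ) a b
  simp only [empBellman, add_assoc, ← WithBot.add_finset_sup]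
  congr 1
  calc ((univ.sup fun u => univ.sup fun j => g j (xp i, u) + (c j : WithBot ℝ)).map (γ * ·))
      = univ.sup fun u => univ.sup fun j =>
          (g j (xp i, u)).map (γ * ·) + ((γ * c j : ℝ) : WithBot ℝ) := by
        simp only [WithBot.map_finset_sup hscale, hadd, WithBot.map_coe]
    _ = univ.sup fun j =>
          (univ.sup fun u => g j (xp i, u)).map (γ * ·) + ((γ * c j : ℝ) : WithBot ℝ) := by
        rw [Finset.sup_comm]
        simp only [WithBot.map_finset_sup hscale, WithBot.finset_sup_add]

theorem mp_empirical_bellman_II_general {X U : Type*} [Fintype U] {n p : ℕ}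
    (γ : ℝ) (hγ : 0 < γ ∧ γ < 1)
    (z : Fin n → X × U) (xp : Fin n → X) (r : Fin n → ℝ)
    (f : Fin p → X × U → WithBot ℝ)
    (Fs Gs : Fin n → Fin p → WithBot ℝ)
    (hFs : ∀ i j, Fs i j = f j (z i))
    (hGs : ∀ i j, Gs i j = empBellman r γ xp (f j) i)
    (Cbar : Fin p → Fin p → WithBot ℝ)
    (hC : mpMul Fs Cbar = Gs)
    (θbar : Fin p → ℝ)
    (hθ : ∀ j, (θbar j : WithBot ℝ) =
          mpMulVec Cbar (fun k => ((γ * θbar k : ℝ) : WithBot ℝ)) j) :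
    ∀ i, (univ.sup fun j => f j (z i) + (θbar j : WithBot ℝ)) =
      empBellman r γ xp (fun w => univ.sup fun j => f j w + (θbar j : WithBot ℝ)) i := by
  intro i
  calc (univ.sup fun j => f j (z i) + (θbar j : WithBot ℝ))
      = mpMulVec Fs (fun j => (θbar j : WithBot ℝ)) i := by simp only [mpMulVec, hFs]
    _ = mpMulVec Gs (fun k => ((γ * θbar k : ℝ) : WithBot ℝ)) i := by
        rw [funext hθ, ← mpMulVec_mpMul, hC]
    _ = _ := by
        simp only [mpMulVec, hGs]
        exact (empBellman_finset_sup r hγ.1.le xp f θbar i).symm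

/-- if `Fₛ ⊠ C̄ₛ = Gₛ` and `θ̄ = C̄ₛ ⊠ (γθ̄)`, then `Q_θ̄` solves the
empirical Bellman equation. -/
theorem mp_empirical_bellman_II {X U : Type*} [Fintype U] [Nonempty U] {n p : ℕ}
    (γ : ℝ) (hγ : 0 < γ ∧ γ < 1)
    (z : Fin n → X × U) (xp : Fin n → X) (r : Fin n → ℝ)
    (f : Fin p → X × U → WithBot ℝ)
    (Fs Gs : Fin n → Fin p → WithBot ℝ)
    (hFs : ∀ i j, Fs i j = f j (z i))
    (hGs : ∀ i j, Gs i j = empBellman r γ xp (f j) i)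
    (Cbar : Fin p → Fin p → WithBot ℝ)
    (hC : mpMul Fs Cbar = Gs)
    (θbar : Fin p → ℝ)
    (hθ : ∀ j, (θbar j : WithBot ℝ) =
          mpMulVec Cbar (fun k => ((γ * θbar k : ℝ) : WithBot ℝ)) j) :
    ∀ i, (univ.sup fun j => f j (z i) + (θbar j : WithBot ℝ)) =
      empBellman r γ xp (fun w => univ.sup fun j => f j w + (θbar j : WithBot ℝ)) i :=
  mp_empirical_bellman_II_general γ hγ z xp r f Fs Gs hFs hGs Cbar hC θbar hθ
end

section
/- Let $\mathbf{D}: \mathbb{R}^p \to \mathbb{R}^p$ be the max-plus FQI operator $\mathbf{D}\theta = -[F_s^\top \boxtimes (-(G_s \boxtimes (\gamma\theta)))]$ with $F_s$ doubly $\mathbb{R}$-astic, $G_s$ row $\mathbb{R}$-astic, and $\gamma \in (0,1)$. Then the iteration $\theta^{(\ell+1)} = \mathbf{D}\theta^{(\ell)}$ started from $\theta^{(0)} = 0$ converges to the unique fixed point $\theta^* \in \mathbb{R}^p$ of $\mathbf{D}$, with $\|\theta^{(\ell)} - \theta^*\|_\infty \le \frac{\gamma^\ell}{1-\gamma}\|\theta^{(1)}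 - \theta^{(0)}\|_\infty$. -/
/-! `D` is the composite of the scaling `θ ↦ γθ`, two max-plus products and two negations.
A max-plus product is monotone and commutes with adding a constant, so wherever it is real-valued
it is nonexpansive in the sup norm. Hence `D` is a `γ`-contraction of `(Fin p → ℝ, ‖·‖∞)`, and
Banach's fixed-point theorem gives the fixed point and the a priori error bound. -/

open Finset

theorem mpMulVec_coe_le_add {m k : ℕ} (A : Fin m → Fin k → WithBot ℝ) {x y : Fin k → ℝ} {c : ℝ}
    (h : ∀ j, x j ≤ y j + c) (i : Fin m) :
    mpMulVec A (fun j => (x j : WithBot ℝ)) i ≤ mpMulVec A (fun j => (y j : WithBot ℝ)) i + c := by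
  refine Finset.sup_le fun j _ => ?_
  calc A i j + (x j : WithBot ℝ)
      ≤ A i j + ((y j + c : ℝ) : WithBot ℝ) := by gcongr; exact WithBot.coe_le_coe.mpr (h j)
    _ = A i j + (y j : WithBot ℝ) + c := by rw [WithBot.coe_add, add_assoc]
    _ ≤ mpMulVec A (fun j => (y j : WithBot ℝ)) i + c := by
        gcongr
        exact Finset.le_sup (f := fun j => A i j + (y j : WithBot ℝ)) (mem_univ j)

theorem le_add_dist_of_eq_mpMulVec {m k : ℕ} (A : Fin m → Fin k → WithBot ℝ) {u v : Fin m → ℝ}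
    {x y : Fin k → ℝ} (hu : ∀ i, (u i : WithBot ℝ) = mpMulVec A (fun j => (x j : WithBot ℝ)) i)
    (hv : ∀ i, (v i : WithBot ℝ) = mpMulVec A (fun j => (y j : WithBot ℝ)) i) (i : Fin m) :
    u i ≤ v i + dist x y := by
  have hxy : ∀ j, x j ≤ y j + dist x y := fun j => by
    have := (le_abs_self _).trans ((Real.dist_eq (x j) (y j)) ▸ dist_le_pi_dist x y j)
    linarith
  rw [← WithBot.coe_le_coe, WithBot.coe_add, hu, hv]
  exact mpMulVec_coe_le_add A hxy i

theorem dist_le_of_eq_mpMulVec {m k : ℕ} (A : Fin m → Fin k → WithBot ℝ) {u v : Fin m → ℝ}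
    {x y : Fin k → ℝ} (hu : ∀ i, (u i : WithBot ℝ) = mpMulVec A (fun j => (x j : WithBot ℝ)) i)
    (hv : ∀ i, (v i : WithBot ℝ) = mpMulVec A (fun j => (y j : WithBot ℝ)) i) :
    dist u v ≤ dist x y := by
  refine (dist_pi_le_iff dist_nonneg).mpr fun i => ?_
  have huv := le_add_dist_of_eq_mpMulVec A hu hv i
  have hvu := le_add_dist_of_eq_mpMulVec A hv hu i
  rw [dist_comm] at hvu
  rw [Real.dist_eq, abs_sub_le_iff]
  constructor <;> linarith

theorem dist_le_mul_of_eq_mpMulVec_mul {m k : ℕ} (A : Fin m → Fin k → WithBot ℝ) {c : ℝ}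
    (hc : 0 ≤ c) {u v : Fin m → ℝ} {x y : Fin k → ℝ}
    (hu : ∀ i, (u i : WithBot ℝ) = mpMulVec A (fun j => ((c * x j : ℝ) : WithBot ℝ)) i)
    (hv : ∀ i, (v i : WithBot ℝ) = mpMulVec A (fun j => ((c * y j : ℝ) : WithBot ℝ)) i) :
    dist u v ≤ c * dist x y := by
  calc dist u v ≤ dist (c • x) (c • y) := dist_le_of_eq_mpMulVec A hu hv
    _ = c * dist x y := by rw [dist_smul₀, Real.norm_of_nonneg hc]

theorem dist_le_of_neg_eq_mpMulVec_neg {m k : ℕ} (A : Fin m → Fin k → WithBot ℝ)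
    {u v : Fin m → ℝ} {x y : Fin k → ℝ}
    (hu : ∀ i, ((-u i : ℝ) : WithBot ℝ) = mpMulVec A (fun j => ((-x j : ℝ) : WithBot ℝ)) i)
    (hv : ∀ i, ((-v i : ℝ) : WithBot ℝ) = mpMulVec A (fun j => ((-y j : ℝ) : WithBot ℝ)) i) :
    dist u v ≤ dist x y := by
  rw [← dist_neg_neg u, ← dist_neg_neg x]
  exact dist_le_of_eq_mpMulVec A hu hv

theorem mpfqi_iteration_convergence_general {n p : ℕ}
    (Fs Gs : Fin n → Fin p → WithBot ℝ)
    (γ : ℝ) (hγ0 : 0 < γ) (hγ1 : γ < 1)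
    (g : (Fin p → ℝ) → Fin n → ℝ)
    (hg : ∀ θ i, (g θ i : WithBot ℝ) =
          mpMulVec Gs (fun j => ((γ * θ j : ℝ) : WithBot ℝ)) i)
    (D : (Fin p → ℝ) → Fin p → ℝ)
    (hD : ∀ θ j, ((-(D θ j) : ℝ) : WithBot ℝ) =
          mpMulVec (fun j i => Fs i j) (fun i => ((-(g θ i) : ℝ) : WithBot ℝ)) j) :
    ∃ θstar : Fin p → ℝ, D θstar = θstar ∧
      (∀ θ' : Fin p → ℝ, D θ' = θ' → θ' = θstar) ∧
      ∀ ℓ : ℕ, ‖D^[ℓ] 0 - θstar‖ ≤ γ ^ ℓ / (1 - γ) * ‖D 0 - (0 : Fin p → ℝ)‖ := by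
  have hcontr : ContractingWith ⟨γ, hγ0.le⟩ D :=
    ⟨hγ1, LipschitzWith.of_dist_le_mul fun θ θ' =>
      (dist_le_of_neg_eq_mpMulVec_neg _ (hD θ) (hD θ')).trans
        (dist_le_mul_of_eq_mpMulVec_mul Gs hγ0.le (hg θ) (hg θ'))⟩
  refine ⟨hcontr.fixedPoint D, hcontr.fixedPoint_isFixedPt,
    fun θ' hθ' => hcontr.fixedPoint_unique hθ', fun ℓ => ?_⟩
  have hbound := hcontr.apriori_dist_iterate_fixedPoint_le 0 ℓ
  rw [dist_eq_norm, dist_comm, dist_eq_norm] at hbound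
  calc ‖D^[ℓ] 0 - hcontr.fixedPoint D‖ ≤ ‖D 0 - 0‖ * γ ^ ℓ / (1 - γ) := hbound
    _ = γ ^ ℓ / (1 - γ) * ‖D 0 - 0‖ := by ring

/-- the MP-FQI iteration `θ⁽ˡ⁺¹⁾ = Dθ⁽ˡ⁾` from `θ⁽⁰⁾ = 0` converges to
the unique fixed point `θ*` with `‖θ⁽ˡ⁾ - θ*‖ ≤ γ^ℓ/(1-γ) ‖θ⁽¹⁾ - θ⁽⁰⁾‖`. -/
theorem mpfqi_iteration_convergence {n p : ℕ}
    (Fs Gs : Fin n → Fin p → WithBot ℝ)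
    (hFrow : ∀ i, ∃ j, Fs i j ≠ ⊥) (hFcol : ∀ j, ∃ i, Fs i j ≠ ⊥)
    (hGrow : ∀ i, ∃ j, Gs i j ≠ ⊥)
    (γ : ℝ) (hγ0 : 0 < γ) (hγ1 : γ < 1)
    (g : (Fin p → ℝ) → Fin n → ℝ)
    (hg : ∀ θ i, (g θ i : WithBot ℝ) =
          mpMulVec Gs (fun j => ((γ * θ j : ℝ) : WithBot ℝ)) i)
    (D : (Fin p → ℝ) → Fin p → ℝ)
    (hD : ∀ θ j, ((-(D θ j) : ℝ) : WithBot ℝ) =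
          mpMulVec (fun j i => Fs i j) (fun i => ((-(g θ i) : ℝ) : WithBot ℝ)) j) :
    ∃ θstar : Fin p → ℝ, D θstar = θstar ∧
      (∀ θ' : Fin p → ℝ, D θ' = θ' → θ' = θstar) ∧
      ∀ ℓ : ℕ, ‖D^[ℓ] 0 - θstar‖ ≤ γ ^ ℓ / (1 - γ) * ‖D 0 - (0 : Fin p → ℝ)‖ :=
  mpfqi_iteration_convergence_general Fs Gs γ hγ0 hγ1 g hg D hD
end
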